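/- If 𝒜 = {A_1, …, A_r} is an irreducible finite set of real m×m matrices, then there exists an extremal norm for 𝒜, i.e. a norm ‖·‖ on ℝ^m such that ‖A_i x‖ ≤ ρ(𝒜)·‖x‖ for all 1 ≤ i ≤ r and all x ∈ ℝ^m; equivalently, the infimum in ρ(𝒜) = inf_{‖·‖} max_{1≤i≤r} ‖A_i‖ (infimum over all norms on ℝ^m, with ‖A_i‖ the induced operator norm) is attained. -/

import Mathlib

open Matrix Filter Topology Bornology Pointwise

/-- `N` is a norm on `ℝ^m`: nonnegative, definite, absolutely homogeneous, subadditive. -/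
def IsNorm {m : ℕ} (N : (Fin m → ℝ) → ℝ) : Prop :=
  (∀ x, 0 ≤ N x) ∧ (∀ x, N x = 0 → x = 0) ∧
    (∀ (t : ℝ) (x), N (t • x) = |t| * N x) ∧ (∀ x y, N (x + y) ≤ N x + N y)

/-- `N` is a seminorm on `ℝ^m`. -/
def IsSeminorm {m : ℕ} (N : (Fin m → ℝ) → ℝ) : Prop :=
  (∀ x, 0 ≤ N x) ∧
    (∀ (t : ℝ) (x), N (t • x) = |t| * N x) ∧ (∀ x y, N (x + y) ≤ N x + N y)

/-- The family `A` is irreducible: the matrices have no common invariant subspace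
other than `⊥` and `⊤`. -/
def IsIrreducibleFamily {m r : ℕ} (A : Fin r → Matrix (Fin m) (Fin m) ℝ) : Prop :=
  ∀ W : Submodule ℝ (Fin m → ℝ), (∀ i, ∀ x ∈ W, (A i).mulVec x ∈ W) → W = ⊥ ∨ W = ⊤

/-- The operator norm of a matrix acting on `ℝ^m` (with its sup norm). -/
noncomputable def matNorm {m : ℕ} (M : Matrix (Fin m) (Fin m) ℝ) : ℝ :=
  ‖LinearMap.toContinuousLinearMap M.mulVecLin‖

/-- The joint spectral radius of the family `A`:
`limsup_n (max over words of length n of the norm of the product)^(1/n)`. -/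
noncomputable def jsr {m r : ℕ} (A : Fin r → Matrix (Fin m) (Fin m) ℝ) : ℝ :=
  Filter.atTop.limsup fun n : ℕ =>
    (⨆ w : Fin n → Fin r, matNorm (List.ofFn fun k => A (w k)).prod) ^ (1 / (n : ℝ))

/-- `maxA A N x = max_i N (A_i x)`. -/
noncomputable def maxA {m r : ℕ} (A : Fin r → Matrix (Fin m) (Fin m) ℝ)
    (N : (Fin m → ℝ) → ℝ) (x : Fin m → ℝ) : ℝ :=
  ⨆ i, N ((A i).mulVec x)

/-- `ρ⁺ = max_{x ≠ 0} (max_i N (A_i x)) / N x`. -/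
noncomputable def rhoSup {m r : ℕ} (A : Fin r → Matrix (Fin m) (Fin m) ℝ)
    (N : (Fin m → ℝ) → ℝ) : ℝ :=
  sSup ((fun x => maxA A N x / N x) '' {x | x ≠ 0})

/-- `ρ⁻ = min_{x ≠ 0} (max_i N (A_i x)) / N x`. -/
noncomputable def rhoInf {m r : ℕ} (A : Fin r → Matrix (Fin m) (Fin m) ℝ)
    (N : (Fin m → ℝ) → ℝ) : ℝ :=
  sInf ((fun x => maxA A N x / N x) '' {x | x ≠ 0})

/-- An averaging function: continuous on positives, `γ t t = t`, and strictly
between `min` and `max` off the diagonal. -/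
def IsAveraging (γ : ℝ → ℝ → ℝ) : Prop :=
  ContinuousOn (fun p : ℝ × ℝ => γ p.1 p.2) {p | 0 < p.1 ∧ 0 < p.2} ∧
    (∀ t, 0 < t → γ t t = t) ∧
    ∀ t s, 0 < t → 0 < s → t ≠ s → min t s < γ t s ∧ γ t s < max t s

/-- The max-relaxation iteration: `‖x‖_{n+1} = max (‖x‖_n, γ_n⁻¹ max_i ‖A_i x‖_n)`
where `γ_n = γ (ρ⁻_n, ρ⁺_n)`. -/
noncomputable def iterN {m r : ℕ} (A : Fin r → Matrix (Fin m) (Fin m) ℝ)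
    (γ : ℝ → ℝ → ℝ) (N0 : (Fin m → ℝ) → ℝ) : ℕ → (Fin m → ℝ) → ℝ
  | 0 => N0
  | n + 1 => fun x =>
      max (iterN A γ N0 n x)
        ((γ (rhoInf A (iterN A γ N0 n)) (rhoSup A (iterN A γ N0 n)))⁻¹ *
          maxA A (iterN A γ N0 n) x)

/-- The normalized norms `‖x‖°_n = ‖x‖_n / ‖e‖_n` of the max-relaxation iteration
(for `n = 0` this equals `‖x‖_0` since `‖e‖_0 = 1`). -/
noncomputable def iterNnorm {m r : ℕ} (A : Fin r → Matrix (Fin m) (Fin m) ℝ)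
    (γ : ℝ → ℝ → ℝ) (N0 : (Fin m → ℝ) → ℝ) (e : Fin m → ℝ) (n : ℕ) :
    (Fin m → ℝ) → ℝ :=
  fun x => iterN A γ N0 n x / iterN A γ N0 n e

/-- `e⁺(N, N') = max_{x ≠ 0} N x / N' x`. -/
noncomputable def ePlus {m : ℕ} (N N' : (Fin m → ℝ) → ℝ) : ℝ :=
  sSup ((fun x => N x / N' x) '' {x | x ≠ 0})

/-- `e⁻(N, N') = min_{x ≠ 0} N x / N' x`. -/
noncomputable def eMinus {m : ℕ} (N N' : (Fin m → ℝ) → ℝ) : ℝ :=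
  sInf ((fun x => N x / N' x) '' {x | x ≠ 0})

/-- The eccentricity of the norm `N` with respect to the norm `N'`. -/
noncomputable def ecc {m : ℕ} (N N' : (Fin m → ℝ) → ℝ) : ℝ :=
  ePlus N N' / eMinus N N'

/-!
For `t > ρ(𝒜)` the function `x ↦ sup_w t^{-|w|} ‖A_w x‖`, the supremum taken over all products
`A_w` of the matrices, is a norm that each `A_i` expands by at most the factor `t`. Rescale these
norms to have maximum `1` on the unit sphere and take the pointwise `limsup` as `t ↓ ρ(𝒜)`: this is
a seminorm `M ≤ ‖·‖` with `M (A_i x) ≤ ρ(𝒜) M x`, and it is nonzero because the points where the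
approximants equal `1` accumulate on the compact unit sphere. The kernel of `M` is a common
invariant subspace, so irreducibility makes `M` a norm. Conversely, a norm `N` with
`N (A_i x) ≤ s N x` bounds every product of length `n` by a constant times `s ^ n`, so
`ρ(𝒜) ≤ s`; applied to `s = ρ⁺(M)` this gives `ρ⁺(M) = ρ(𝒜)`.
-/

section RootGrowth

variable {a : ℕ → ℝ} {C s : ℝ}

lemma eventually_rpow_one_div_le_of_le_mul_pow (ha : ∀ n, 0 ≤ a n) (hC : 0 < C) (hs : 0 ≤ s)
    (h : ∀ n, a n ≤ C * s ^ n) :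
    ∀ᶠ n : ℕ in atTop, a n ^ (1 / (n : ℝ)) ≤ C ^ (1 / (n : ℝ)) * s := by
  filter_upwards [eventually_ne_atTop 0] with n hn
  calc a n ^ (1 / (n : ℝ)) ≤ (C * s ^ n) ^ (1 / (n : ℝ)) :=
        Real.rpow_le_rpow (ha n) (h n) (by positivity)
    _ = C ^ (1 / (n : ℝ)) * s := by
        rw [Real.mul_rpow hC.le (by positivity), one_div, Real.pow_rpow_inv_natCast hs hn]

lemma tendsto_rpow_one_div_mul (hC : 0 < C) (s : ℝ) :
    Tendsto (fun n : ℕ => C ^ (1 / (n : ℝ)) * s) atTop (𝓝 s) := by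
  simpa using (tendsto_const_nhds.rpow tendsto_one_div_atTop_nhds_zero_nat
    (Or.inl hC.ne')).mul_const s

lemma isBoundedUnder_rpow_one_div_of_le_mul_pow (ha : ∀ n, 0 ≤ a n) (hC : 0 < C) (hs : 0 ≤ s)
    (h : ∀ n, a n ≤ C * s ^ n) :
    IsBoundedUnder (· ≤ ·) atTop fun n : ℕ => a n ^ (1 / (n : ℝ)) :=
  (tendsto_rpow_one_div_mul hC s).isBoundedUnder_le.mono_le
    (eventually_rpow_one_div_le_of_le_mul_pow ha hC hs h)

lemma limsup_rpow_one_div_le_of_le_mul_pow (ha : ∀ n, 0 ≤ a n) (hC : 0 < C) (hs : 0 ≤ s)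
    (h : ∀ n, a n ≤ C * s ^ n) :
    limsup (fun n : ℕ => a n ^ (1 / (n : ℝ))) atTop ≤ s :=
  (limsup_le_limsup (eventually_rpow_one_div_le_of_le_mul_pow ha hC hs h)
    (isCoboundedUnder_le_of_le atTop fun n => Real.rpow_nonneg (ha n) _)
    (tendsto_rpow_one_div_mul hC s).isBoundedUnder_le).trans_eq
    (tendsto_rpow_one_div_mul hC s).limsup_eq

lemma exists_le_mul_pow_of_limsup_rpow_one_div_lt {t : ℝ} (ha : ∀ n, 0 ≤ a n)
    (hbdd : IsBoundedUnder (· ≤ ·) atTop fun n : ℕ => a n ^ (1 / (n : ℝ))) (ht0 : 0 < t)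
    (ht : limsup (fun n : ℕ => a n ^ (1 / (n : ℝ))) atTop < t) :
    ∃ C, ∀ n, a n ≤ C * t ^ n := by
  have hev : ∀ᶠ n in atTop, ‖a n‖ ≤ 1 * ‖t ^ n‖ := by
    filter_upwards [eventually_lt_of_limsup_lt ht hbdd, eventually_ne_atTop 0] with n hn hn0
    rw [one_mul, Real.norm_of_nonneg (ha n), Real.norm_of_nonneg (pow_pos ht0 n).le,
      ← Real.rpow_inv_natCast_pow (ha n) hn0, ← one_div]
    exact pow_le_pow_left₀ (Real.rpow_nonneg (ha n) _) hn.le n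
  obtain ⟨C, hC⟩ := (Asymptotics.isBigO_nat_atTop_iff fun n hn =>
    absurd hn (pow_ne_zero n ht0.ne')).mp (Asymptotics.IsBigO.of_bound 1 hev)
  refine ⟨C, fun n => ?_⟩
  simpa [Real.norm_of_nonneg (ha n), abs_of_pos ht0] using hC n

lemma limsup_le_mul_limsup_of_le_mul {u v c : ℕ → ℝ} {ρ B : ℝ} (hu : ∀ k, 0 ≤ u k)
    (hv : ∀ k, 0 ≤ v k) (hvB : ∀ k, v k ≤ B) (hc : ∀ k, 0 ≤ c k)
    (hcρ : Tendsto c atTop (𝓝 ρ)) (h : ∀ k, u k ≤ c k * v k) :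
    limsup u atTop ≤ ρ * limsup v atTop := by
  have hvbdd : IsBoundedUnder (· ≤ ·) atTop v := isBoundedUnder_of_eventually_le (.of_forall hvB)
  calc limsup u atTop ≤ limsup (c * v) atTop :=
        limsup_le_limsup (.of_forall h) (isCoboundedUnder_le_of_le atTop hu)
          (isBoundedUnder_le_mul_of_nonneg (.of_forall hc) hcρ.isBoundedUnder_le
            (.of_forall hv) hvbdd)
    _ ≤ limsup c atTop * limsup v atTop :=
        limsup_mul_le (.of_forall hc) hcρ.isBoundedUnder_le (.of_forall hv) hvbdd
    _ = ρ * limsup v atTop := by rw [hcρ.limsup_eq]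

end RootGrowth

namespace IsSeminorm

variable {m : ℕ} {N : (Fin m → ℝ) → ℝ}

lemma map_zero (hN : IsSeminorm N) : N 0 = 0 := by
  simpa using hN.2.1 0 0

lemma le_add_map_sub (hN : IsSeminorm N) (x y : Fin m → ℝ) : N x ≤ N y + N (x - y) := by
  simpa using hN.2.2 y (x - y)

lemma const_mul {c : ℝ} (hN : IsSeminorm N) (hc : 0 ≤ c) : IsSeminorm fun x => c * N x := by
  refine ⟨fun x => mul_nonneg hc (hN.1 x), fun t x => ?_, fun x y => ?_⟩
  · change c * N (t • x) = |t| * (c * N x)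
    rw [hN.2.1, mul_left_comm]
  · rw [← mul_add]
    exact mul_le_mul_of_nonneg_left (hN.2.2 x y) hc

lemma continuous_of_le_mul_norm {C : ℝ} (hN : IsSeminorm N) (hC : ∀ x, N x ≤ C * ‖x‖) :
    Continuous N :=
  (LipschitzWith.of_le_add_mul' C fun x y => by
    rw [dist_eq_norm]
    exact (hN.le_add_map_sub x y).trans (add_le_add le_rfl (hC _))).continuous

lemma apply_eq_norm_mul (hN : IsSeminorm N) {x : Fin m → ℝ} (hx : x ≠ 0) :
    N x = ‖x‖ * N (‖x‖⁻¹ • x) := by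
  rw [hN.2.1, abs_of_nonneg (inv_nonneg.mpr (norm_nonneg x)), ← mul_assoc,
    mul_inv_cancel₀ (norm_ne_zero_iff.mpr hx), one_mul]

lemma le_mul_norm_of_forall_norm_eq_one {D : ℝ} (hN : IsSeminorm N)
    (h : ∀ y, ‖y‖ = 1 → N y ≤ D) (x : Fin m → ℝ) : N x ≤ D * ‖x‖ := by
  rcases eq_or_ne x 0 with rfl | hx
  · simp [hN.map_zero]
  rw [hN.apply_eq_norm_mul hx, mul_comm]
  exact mul_le_mul_of_nonneg_right (h _ (norm_smul_inv_norm hx)) (norm_nonneg x)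

lemma mul_norm_le_of_forall_norm_eq_one {c : ℝ} (hN : IsSeminorm N)
    (h : ∀ y, ‖y‖ = 1 → c ≤ N y) (x : Fin m → ℝ) : c * ‖x‖ ≤ N x := by
  rcases eq_or_ne x 0 with rfl | hx
  · simp [hN.map_zero]
  rw [hN.apply_eq_norm_mul hx, mul_comm]
  exact mul_le_mul_of_nonneg_left (h _ (norm_smul_inv_norm hx)) (norm_nonneg x)

lemma exists_pos_mul_le_norm_and_eq_one [NeZero m] {C : ℝ} (hN : IsSeminorm N)
    (hup : ∀ x, N x ≤ C * ‖x‖) (hlow : ∀ x, ‖x‖ ≤ N x) :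
    ∃ c > 0, (∀ x, c * N x ≤ ‖x‖) ∧ ∃ x, ‖x‖ = 1 ∧ c * N x = 1 := by
  obtain ⟨x₀, hx₀, hmax⟩ := (isCompact_sphere (0 : Fin m → ℝ) 1).exists_isMaxOn
    (NormedSpace.sphere_nonempty.mpr zero_le_one) (hN.continuous_of_le_mul_norm hup).continuousOn
  have hx₀1 : ‖x₀‖ = 1 := mem_sphere_zero_iff_norm.mp hx₀
  have hpos : 0 < N x₀ := one_pos.trans_le (hx₀1 ▸ hlow x₀)
  refine ⟨(N x₀)⁻¹, inv_pos.mpr hpos, fun x => ?_, x₀, hx₀1, inv_mul_cancel₀ hpos.ne'⟩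
  rw [inv_mul_le_iff₀ hpos]
  exact hN.le_mul_norm_of_forall_norm_eq_one
    (fun y hy => isMaxOn_iff.mp hmax y (mem_sphere_zero_iff_norm.mpr hy)) x

def ker (hN : IsSeminorm N) : Submodule ℝ (Fin m → ℝ) where
  carrier := {x | N x = 0}
  zero_mem' := hN.map_zero
  add_mem' {x y} hx hy := le_antisymm
    ((hN.2.2 x y).trans_eq (by rw [show N x = 0 from hx, show N y = 0 from hy, add_zero]))
    (hN.1 _)
  smul_mem' t x hx := by
    change N (t • x) = 0
    rw [hN.2.1, show N x = 0 from hx, mul_zero]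

end IsSeminorm

namespace IsNorm

variable {m : ℕ} {N : (Fin m → ℝ) → ℝ}

lemma isSeminorm (hN : IsNorm N) : IsSeminorm N := ⟨hN.1, hN.2.2.1, hN.2.2.2⟩

lemma pos (hN : IsNorm N) {x : Fin m → ℝ} (hx : x ≠ 0) : 0 < N x :=
  (hN.1 x).lt_of_ne' (mt (hN.2.1 x) hx)

lemma exists_pos_mul_norm_le [NeZero m] (hN : IsNorm N) (hcont : Continuous N) :
    ∃ c > 0, ∀ x, c * ‖x‖ ≤ N x := by
  obtain ⟨z, hz, hmin⟩ := (isCompact_sphere (0 : Fin m → ℝ) 1).exists_isMinOn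
    (NormedSpace.sphere_nonempty.mpr zero_le_one) hcont.continuousOn
  have hz0 : z ≠ 0 := by
    rintro rfl
    simp at hz
  exact ⟨N z, hN.pos hz0, hN.isSeminorm.mul_norm_le_of_forall_norm_eq_one
    fun y hy => isMinOn_iff.mp hmin y (mem_sphere_zero_iff_norm.mpr hy)⟩

end IsNorm

lemma IsIrreducibleFamily.isNorm_of_isSeminorm {m r : ℕ} {A : Fin r → Matrix (Fin m) (Fin m) ℝ}
    {N : (Fin m → ℝ) → ℝ} {s : ℝ} (hA : IsIrreducibleFamily A) (hN : IsSeminorm N)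
    (hinv : ∀ i x, N (A i *ᵥ x) ≤ s * N x) (hne : ∃ x, N x ≠ 0) : IsNorm N := by
  have hker : ∀ i, ∀ x ∈ hN.ker, A i *ᵥ x ∈ hN.ker := fun i x (hx : N x = 0) =>
    le_antisymm (by simpa [hx] using hinv i x) (hN.1 _)
  rcases hA hN.ker hker with hbot | htop
  · refine ⟨hN.1, fun x hx => ?_, hN.2.1, hN.2.2⟩
    simpa [hbot] using (show x ∈ hN.ker from hx)
  · obtain ⟨x, hx⟩ := hne
    exact absurd (show x ∈ hN.ker from htop ▸ Submodule.mem_top) hx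

section WordProducts

variable {m r : ℕ} {A : Fin r → Matrix (Fin m) (Fin m) ℝ}

lemma norm_mulVec_le_matNorm (M : Matrix (Fin m) (Fin m) ℝ) (x : Fin m → ℝ) :
    ‖M *ᵥ x‖ ≤ matNorm M * ‖x‖ :=
  (LinearMap.toContinuousLinearMap M.mulVecLin).le_opNorm x

lemma matNorm_le_of_forall {M : Matrix (Fin m) (Fin m) ℝ} {c : ℝ} (hc : 0 ≤ c)
    (h : ∀ x, ‖M *ᵥ x‖ ≤ c * ‖x‖) : matNorm M ≤ c :=
  ContinuousLinearMap.opNorm_le_bound _ hc h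

noncomputable def wordProd (A : Fin r → Matrix (Fin m) (Fin m) ℝ) {n : ℕ} (w : Fin n → Fin r) :
    Matrix (Fin m) (Fin m) ℝ :=
  (List.ofFn fun k => A (w k)).prod

lemma wordProd_zero (w : Fin 0 → Fin r) : wordProd A w = 1 := by
  simp [wordProd]

lemma wordProd_succ {n : ℕ} (w : Fin (n + 1) → Fin r) :
    wordProd A w = A (w 0) * wordProd A (Fin.tail w) := by
  simp [wordProd, List.ofFn_succ, Fin.tail]

lemma wordProd_snoc {n : ℕ} (w : Fin n → Fin r) (i : Fin r) :
    wordProd A (Fin.snoc w i : Fin (n + 1) → Fin r) = wordProd A w * A i := by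
  rw [wordProd, wordProd, List.ofFn_succ']
  simp

lemma apply_wordProd_mulVec_le {f : (Fin m → ℝ) → ℝ} {s : ℝ} (hs : 0 ≤ s)
    (h : ∀ i x, f (A i *ᵥ x) ≤ s * f x) {n : ℕ} (w : Fin n → Fin r) (x : Fin m → ℝ) :
    f (wordProd A w *ᵥ x) ≤ s ^ n * f x := by
  induction n generalizing x with
  | zero => simp [wordProd_zero w]
  | succ n ih =>
    rw [wordProd_succ, ← mulVec_mulVec, pow_succ', mul_assoc]
    exact (h _ _).trans (mul_le_mul_of_nonneg_left (ih _ x) hs)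

noncomputable def maxWordNorm (A : Fin r → Matrix (Fin m) (Fin m) ℝ) (n : ℕ) : ℝ :=
  ⨆ w : Fin n → Fin r, matNorm (wordProd A w)

lemma jsr_eq_limsup (A : Fin r → Matrix (Fin m) (Fin m) ℝ) :
    jsr A = limsup (fun n : ℕ => maxWordNorm A n ^ (1 / (n : ℝ))) atTop :=
  rfl

lemma maxWordNorm_nonneg {n : ℕ} : 0 ≤ maxWordNorm A n :=
  Real.iSup_nonneg fun _ => norm_nonneg _

lemma matNorm_le_maxWordNorm {n : ℕ} (w : Fin n → Fin r) :
    matNorm (wordProd A w) ≤ maxWordNorm A n :=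
  le_ciSup (f := fun w => matNorm (wordProd A w)) (Set.finite_range _).bddAbove w

lemma maxWordNorm_le_mul_pow {f : (Fin m → ℝ) → ℝ} {c C s : ℝ} (hc : 0 < c) (hC : 0 ≤ C)
    (hs : 0 ≤ s) (hlow : ∀ x, c * ‖x‖ ≤ f x) (hup : ∀ x, f x ≤ C * ‖x‖)
    (h : ∀ i x, f (A i *ᵥ x) ≤ s * f x) (n : ℕ) :
    maxWordNorm A n ≤ c⁻¹ * C * s ^ n := by
  refine Real.iSup_le (fun w => matNorm_le_of_forall (by positivity) fun x => ?_) (by positivity)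
  calc ‖wordProd A w *ᵥ x‖ ≤ c⁻¹ * f (wordProd A w *ᵥ x) := by
        rw [le_inv_mul_iff₀ hc]
        exact hlow _
    _ ≤ c⁻¹ * (s ^ n * (C * ‖x‖)) := by
        gcongr
        exact (apply_wordProd_mulVec_le hs h w x).trans (by gcongr; exact hup x)
    _ = c⁻¹ * C * s ^ n * ‖x‖ := by ring

variable (A) in
lemma isBoundedUnder_maxWordNorm_rpow :
    IsBoundedUnder (· ≤ ·) atTop fun n : ℕ => maxWordNorm A n ^ (1 / (n : ℝ)) := by
  have hK : 0 ≤ ⨆ i, matNorm (A i) := Real.iSup_nonneg fun _ => norm_nonneg _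
  refine isBoundedUnder_rpow_one_div_of_le_mul_pow (fun _ => maxWordNorm_nonneg) one_pos hK
    fun n => ?_
  simpa using maxWordNorm_le_mul_pow one_pos zero_le_one hK (f := norm) (by simp) (by simp)
    (fun i x => (norm_mulVec_le_matNorm _ _).trans (mul_le_mul_of_nonneg_right
      (le_ciSup (f := fun i => matNorm (A i)) (Set.finite_range _).bddAbove i)
      (norm_nonneg x))) n

variable (A) in
lemma jsr_nonneg : 0 ≤ jsr A := by
  rw [jsr_eq_limsup]
  exact le_limsup_of_frequently_le (.of_forall fun _ => Real.rpow_nonneg maxWordNorm_nonneg _)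
    (isBoundedUnder_maxWordNorm_rpow A)

lemma jsr_le_of_forall_mulVec_le {f : (Fin m → ℝ) → ℝ} {c C s : ℝ} (hc : 0 < c) (hC : 0 < C)
    (hs : 0 ≤ s) (hlow : ∀ x, c * ‖x‖ ≤ f x) (hup : ∀ x, f x ≤ C * ‖x‖)
    (h : ∀ i x, f (A i *ᵥ x) ≤ s * f x) : jsr A ≤ s := by
  rw [jsr_eq_limsup]
  exact limsup_rpow_one_div_le_of_le_mul_pow (fun _ => maxWordNorm_nonneg) (by positivity) hs
    (maxWordNorm_le_mul_pow hc hC.le hs hlow hup h)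

lemma exists_matNorm_wordProd_le_mul_pow {t : ℝ} (ht : jsr A < t) :
    ∃ C, ∀ n (w : Fin n → Fin r), matNorm (wordProd A w) ≤ C * t ^ n := by
  have ht0 : 0 < t := (jsr_nonneg A).trans_lt ht
  rw [jsr_eq_limsup] at ht
  obtain ⟨C, hC⟩ := exists_le_mul_pow_of_limsup_rpow_one_div_lt (fun _ => maxWordNorm_nonneg)
    (isBoundedUnder_maxWordNorm_rpow A) ht0 ht
  exact ⟨C, fun n w => (matNorm_le_maxWordNorm w).trans (hC n)⟩

end WordProducts

section OrbitNorm

variable {m r : ℕ} {A : Fin r → Matrix (Fin m) (Fin m) ℝ} {t C : ℝ}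

noncomputable def orbitNorm (A : Fin r → Matrix (Fin m) (Fin m) ℝ) (t : ℝ) (x : Fin m → ℝ) : ℝ :=
  ⨆ p : Σ n, Fin n → Fin r, ‖wordProd A p.2 *ᵥ x‖ / t ^ p.1

lemma norm_wordProd_mulVec_div_pow_le (ht : 0 < t)
    (hC : ∀ n (w : Fin n → Fin r), matNorm (wordProd A w) ≤ C * t ^ n) {n : ℕ}
    (w : Fin n → Fin r) (x : Fin m → ℝ) : ‖wordProd A w *ᵥ x‖ / t ^ n ≤ C * ‖x‖ := by
  rw [div_le_iff₀ (pow_pos ht n)]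
  calc ‖wordProd A w *ᵥ x‖ ≤ C * t ^ n * ‖x‖ :=
        (norm_mulVec_le_matNorm _ x).trans (mul_le_mul_of_nonneg_right (hC n w) (norm_nonneg x))
    _ = C * ‖x‖ * t ^ n := by ring

lemma orbitNorm_bddAbove (ht : 0 < t)
    (hC : ∀ n (w : Fin n → Fin r), matNorm (wordProd A w) ≤ C * t ^ n) (x : Fin m → ℝ) :
    BddAbove (Set.range fun p : Σ n, Fin n → Fin r => ‖wordProd A p.2 *ᵥ x‖ / t ^ p.1) :=
  ⟨C * ‖x‖, Set.forall_mem_range.mpr fun p => norm_wordProd_mulVec_div_pow_le ht hC p.2 x⟩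

lemma orbitNorm_le (ht : 0 < t)
    (hC : ∀ n (w : Fin n → Fin r), matNorm (wordProd A w) ≤ C * t ^ n) (x : Fin m → ℝ) :
    orbitNorm A t x ≤ C * ‖x‖ :=
  have : Nonempty (Σ n, Fin n → Fin r) := ⟨⟨0, Fin.elim0⟩⟩
  ciSup_le fun p => norm_wordProd_mulVec_div_pow_le ht hC p.2 x

lemma le_orbitNorm (ht : 0 < t)
    (hC : ∀ n (w : Fin n → Fin r), matNorm (wordProd A w) ≤ C * t ^ n) {n : ℕ}
    (w : Fin n → Fin r) (x : Fin m → ℝ) : ‖wordProd A w *ᵥ x‖ / t ^ n ≤ orbitNorm A t x :=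
  le_ciSup (orbitNorm_bddAbove ht hC x) ⟨n, w⟩

lemma norm_le_orbitNorm (ht : 0 < t)
    (hC : ∀ n (w : Fin n → Fin r), matNorm (wordProd A w) ≤ C * t ^ n) (x : Fin m → ℝ) :
    ‖x‖ ≤ orbitNorm A t x := by
  simpa [wordProd_zero] using le_orbitNorm ht hC Fin.elim0 x

lemma isSeminorm_orbitNorm (ht : 0 < t)
    (hC : ∀ n (w : Fin n → Fin r), matNorm (wordProd A w) ≤ C * t ^ n) :
    IsSeminorm (orbitNorm A t) := by
  refine ⟨fun x => (norm_nonneg x).trans (norm_le_orbitNorm ht hC x), fun c x => ?_,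
    fun x y => ?_⟩
  · simp only [orbitNorm, Real.mul_iSup_of_nonneg (abs_nonneg c), mulVec_smul, norm_smul,
      Real.norm_eq_abs, mul_div_assoc]
  · have : Nonempty (Σ n, Fin n → Fin r) := ⟨⟨0, Fin.elim0⟩⟩
    refine ciSup_le fun ⟨n, w⟩ => ?_
    calc ‖wordProd A w *ᵥ (x + y)‖ / t ^ n
        ≤ ‖wordProd A w *ᵥ x‖ / t ^ n + ‖wordProd A w *ᵥ y‖ / t ^ n := by
          rw [mulVec_add, ← add_div]
          exact div_le_div_of_nonneg_right (norm_add_le _ _) (pow_nonneg ht.le n)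
      _ ≤ orbitNorm A t x + orbitNorm A t y :=
          add_le_add (le_orbitNorm ht hC w x) (le_orbitNorm ht hC w y)

lemma orbitNorm_mulVec_le (ht : 0 < t)
    (hC : ∀ n (w : Fin n → Fin r), matNorm (wordProd A w) ≤ C * t ^ n) (i : Fin r)
    (x : Fin m → ℝ) : orbitNorm A t (A i *ᵥ x) ≤ t * orbitNorm A t x := by
  have : Nonempty (Σ n, Fin n → Fin r) := ⟨⟨0, Fin.elim0⟩⟩
  refine ciSup_le fun ⟨n, w⟩ => ?_
  have hsnoc : ‖wordProd A w *ᵥ (A i *ᵥ x)‖ / t ^ n =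
      t * (‖wordProd A (Fin.snoc w i : Fin (n + 1) → Fin r) *ᵥ x‖ / t ^ (n + 1)) := by
    rw [mulVec_mulVec, ← wordProd_snoc, pow_succ]
    field_simp
  rw [hsnoc]
  exact mul_le_mul_of_nonneg_left (le_orbitNorm ht hC _ x) ht.le

lemma exists_isSeminorm_mulVec_le_mul [NeZero m] (ht : jsr A < t) :
    ∃ f : (Fin m → ℝ) → ℝ, IsSeminorm f ∧ (∀ x, f x ≤ ‖x‖) ∧
      (∀ i x, f (A i *ᵥ x) ≤ t * f x) ∧ ∃ x, ‖x‖ = 1 ∧ f x = 1 := by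
  have ht0 : 0 < t := (jsr_nonneg A).trans_lt ht
  obtain ⟨C, hC⟩ := exists_matNorm_wordProd_le_mul_pow ht
  have hN := isSeminorm_orbitNorm ht0 hC
  obtain ⟨c, hc, hle, x, hx, hcx⟩ :=
    hN.exists_pos_mul_le_norm_and_eq_one (orbitNorm_le ht0 hC) (norm_le_orbitNorm ht0 hC)
  refine ⟨fun x => c * orbitNorm A t x, hN.const_mul hc.le, hle, fun i x => ?_, x, hx, hcx⟩
  calc c * orbitNorm A t (A i *ᵥ x) ≤ c * (t * orbitNorm A t x) :=
        mul_le_mul_of_nonneg_left (orbitNorm_mulVec_le ht0 hC i x) hc.le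
    _ = t * (c * orbitNorm A t x) := by ring

end OrbitNorm

section LimsupOfSeminorms

variable {m : ℕ} {f : ℕ → (Fin m → ℝ) → ℝ}

lemma isSeminorm_limsup (hf : ∀ k, IsSeminorm (f k)) (hle : ∀ k x, f k x ≤ ‖x‖) :
    IsSeminorm fun x => limsup (f · x) atTop := by
  have hbdd (x) : IsBoundedUnder (· ≤ ·) atTop (f · x) :=
    isBoundedUnder_of_eventually_le (.of_forall (hle · x))
  have hcobdd (x) : IsCoboundedUnder (· ≤ ·) atTop (f · x) :=
    isCoboundedUnder_le_of_le atTop fun k => (hf k).1 x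
  refine ⟨fun x => le_limsup_of_frequently_le (.of_forall fun k => (hf k).1 x) (hbdd x),
    fun c x => ?_, fun x y => ?_⟩
  · simp only [fun k => (hf k).2.1 c x]
    exact (monotone_mul_left_of_nonneg (abs_nonneg c)).map_limsup_of_continuousAt
      (f · x) (by fun_prop) (hbdd x) (hcobdd x) |>.symm
  · calc limsup (f · (x + y)) atTop ≤ limsup ((f · x) + (f · y)) atTop :=
          limsup_le_limsup (.of_forall fun k => (hf k).2.2 x y) (hcobdd _)
            (isBoundedUnder_le_add (hbdd x) (hbdd y))
      _ ≤ limsup (f · x) atTop + limsup (f · y) atTop :=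
          limsup_add_le (isBoundedUnder_of_eventually_ge (.of_forall fun k => (hf k).1 x))
            (hbdd x) (hcobdd y) (hbdd y)

lemma limsup_apply_le_norm (hf : ∀ k, IsSeminorm (f k)) (hle : ∀ k x, f k x ≤ ‖x‖)
    (x : Fin m → ℝ) : limsup (f · x) atTop ≤ ‖x‖ :=
  limsup_le_of_le (isCoboundedUnder_le_of_le atTop fun k => (hf k).1 x) (.of_forall (hle · x))

lemma exists_limsup_apply_ne_zero (hf : ∀ k, IsSeminorm (f k)) (hle : ∀ k x, f k x ≤ ‖x‖)
    (hone : ∀ k, ∃ x, ‖x‖ = 1 ∧ f k x = 1) : ∃ x, limsup (f · x) atTop ≠ 0 := by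
  choose x hx1 hfx using hone
  obtain ⟨y, -, φ, hφ, hlim⟩ := (isCompact_sphere (0 : Fin m → ℝ) 1).tendsto_subseq
    fun k => mem_sphere_zero_iff_norm.mpr (hx1 k)
  have hclose : ∀ᶠ j in atTop, 1 / 2 ≤ f (φ j) y := by
    filter_upwards [Metric.tendsto_nhds.mp hlim (1 / 2) (by norm_num)] with j hj
    rw [Function.comp_apply, dist_eq_norm] at hj
    linarith [hfx (φ j), (hf (φ j)).le_add_map_sub (x (φ j)) y, hle (φ j) (x (φ j) - y)]
  refine ⟨y, (lt_of_lt_of_le (by norm_num) (le_limsup_of_frequently_le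
    (hφ.tendsto_atTop.frequently hclose.frequently)
    (isBoundedUnder_of_eventually_le (.of_forall (hle · y))))).ne'⟩

end LimsupOfSeminorms

lemma exists_isSeminorm_mulVec_le_jsr_mul {m r : ℕ} [NeZero m]
    (A : Fin r → Matrix (Fin m) (Fin m) ℝ) :
    ∃ M : (Fin m → ℝ) → ℝ, IsSeminorm M ∧ (∀ x, M x ≤ ‖x‖) ∧
      (∀ i x, M (A i *ᵥ x) ≤ jsr A * M x) ∧ ∃ x, M x ≠ 0 := by
  choose f hf hle hA hone using fun k : ℕ => exists_isSeminorm_mulVec_le_mul (A := A)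
    (lt_add_of_pos_right (jsr A) (Nat.one_div_pos_of_nat (n := k)))
  refine ⟨fun x => limsup (f · x) atTop, isSeminorm_limsup hf hle, limsup_apply_le_norm hf hle,
    fun i x => ?_, exists_limsup_apply_ne_zero hf hle hone⟩
  have hρ := jsr_nonneg A
  exact limsup_le_mul_limsup_of_le_mul (fun k => (hf k).1 _) (fun k => (hf k).1 x) (hle · x)
    (fun k => by positivity)
    (by simpa using tendsto_one_div_add_atTop_nhds_zero_nat.const_add (jsr A)) (hA · i x)

section RhoSup

variable {m r : ℕ} {A : Fin r → Matrix (Fin m) (Fin m) ℝ} {N : (Fin m → ℝ) → ℝ} {s : ℝ}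

lemma maxA_div_le (hN : ∀ x, 0 ≤ N x) (hs : 0 ≤ s) (h : ∀ i x, N (A i *ᵥ x) ≤ s * N x)
    (x : Fin m → ℝ) : maxA A N x / N x ≤ s :=
  div_le_of_le_mul₀ (hN x) hs (Real.iSup_le (h · x) (mul_nonneg hs (hN x)))

lemma rhoSup_nonneg (hN : ∀ x, 0 ≤ N x) : 0 ≤ rhoSup A N :=
  Real.sSup_nonneg (Set.forall_mem_image.mpr fun x _ =>
    div_nonneg (Real.iSup_nonneg fun _ => hN _) (hN x))

lemma rhoSup_le (hN : ∀ x, 0 ≤ N x) (hs : 0 ≤ s) (h : ∀ i x, N (A i *ᵥ x) ≤ s * N x) :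
    rhoSup A N ≤ s :=
  Real.sSup_le (Set.forall_mem_image.mpr fun x _ => maxA_div_le hN hs h x) hs

lemma mulVec_le_rhoSup_mul (hN : IsNorm N) (hs : 0 ≤ s) (h : ∀ i x, N (A i *ᵥ x) ≤ s * N x)
    (i : Fin r) (x : Fin m → ℝ) : N (A i *ᵥ x) ≤ rhoSup A N * N x := by
  rcases eq_or_ne x 0 with rfl | hx
  · simp [hN.isSeminorm.map_zero]
  have hbdd : BddAbove ((fun x => maxA A N x / N x) '' {x | x ≠ 0}) :=
    ⟨s, Set.forall_mem_image.mpr fun x _ => maxA_div_le hN.1 hs h x⟩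
  calc N (A i *ᵥ x) ≤ maxA A N x :=
        le_ciSup (f := fun i => N (A i *ᵥ x)) (Set.finite_range _).bddAbove i
    _ = maxA A N x / N x * N x := (div_mul_cancel₀ _ (hN.pos hx).ne').symm
    _ ≤ rhoSup A N * N x :=
        mul_le_mul_of_nonneg_right (le_csSup hbdd ⟨x, hx, rfl⟩) (hN.1 x)

end RhoSup

theorem stmt18_general {m r : ℕ} (hm : 2 ≤ m)
    (A : Fin r → Matrix (Fin m) (Fin m) ℝ) (hA : IsIrreducibleFamily A) :
    ∃ N : (Fin m → ℝ) → ℝ, IsNorm N ∧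
      (∀ (i : Fin r) (x), N ((A i).mulVec x) ≤ jsr A * N x) ∧
      rhoSup A N = jsr A := by
  have : NeZero m := ⟨by omega⟩
  obtain ⟨M, hM, hMle, hMA, hMne⟩ := exists_isSeminorm_mulVec_le_jsr_mul A
  have hMnorm : IsNorm M := hA.isNorm_of_isSeminorm hM hMA hMne
  have hMle' : ∀ x, M x ≤ 1 * ‖x‖ := by simpa using hMle
  obtain ⟨c, hc, hcM⟩ := hMnorm.exists_pos_mul_norm_le (hM.continuous_of_le_mul_norm hMle')
  have hρ := jsr_nonneg A
  refine ⟨M, hMnorm, hMA, le_antisymm (rhoSup_le hM.1 hρ hMA) ?_⟩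
  exact jsr_le_of_forall_mulVec_le hc one_pos (rhoSup_nonneg hM.1) hcM hMle'
    (mulVec_le_rhoSup_mul hMnorm hρ hMA)

/-- an irreducible family admits an extremal norm, i.e. a norm `‖·‖` with
`‖A_i x‖ ≤ ρ(𝒜) ‖x‖` for all `i, x`; equivalently the infimum of the induced operator norms
`max_i ‖A_i‖` over all norms equals `ρ(𝒜)` and is attained. -/
theorem stmt18 {m r : ℕ} (hm : 2 ≤ m) (hr : 1 ≤ r)
    (A : Fin r → Matrix (Fin m) (Fin m) ℝ) (hA : IsIrreducibleFamily A) :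
    ∃ N : (Fin m → ℝ) → ℝ, IsNorm N ∧
      (∀ (i : Fin r) (x), N ((A i).mulVec x) ≤ jsr A * N x) ∧
      rhoSup A N = jsr A :=
  stmt18_general hm A hA
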